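/- arXiv:1707.07334 — 3 statements merged into one kernel-verified Lean document; each statement's English description precedes it below -/
import Mathlib

section
/- Let n, k, x be natural numbers with x ≤ k, and let δ be a real number satisfying 0 < δ ≤ 1/2, (1+δ)^k ≤ 2, and k + 1 ≤ δ·n. Let a, b be natural numbers with a ≤ n, b ≤ n, and |a − b| ≤ δ·n. Then |C(a, x) − C(b, x)| ≤ 4·δ·n^x, where C(·,·) denotes the binomial coefficient with the convention C(L, M) = 0 whenever L < M. -/
/-!
By Pascal's rule `m ↦ C(m, y + 1)` grows by `C(m, y) ≤ n ^ y` at each step `m < n`, so it is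
`n ^ y`-Lipschitz on `[0, n]`; together with `|a - b| ≤ δ n` this bounds the difference for
`x = y + 1` by `δ n ^ (y + 1)`; for `x = 0` it vanishes.
-/

theorem Nat.choose_succ_le_choose_succ_add {a b n y : ℕ} (hba : b ≤ a) (han : a ≤ n) :
    a.choose (y + 1) ≤ b.choose (y + 1) + (a - b) * n ^ y := by
  induction a, hba using Nat.le_induction with
  | base => simp
  | succ a hba ih =>
    have hstep : a.choose y ≤ n ^ y :=
      (Nat.choose_le_choose y (by omega)).trans (Nat.choose_le_pow n y)
    calc (a + 1).choose (y + 1) = a.choose y + a.choose (y + 1) := Nat.choose_succ_succ a y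
      _ ≤ n ^ y + (b.choose (y + 1) + (a - b) * n ^ y) := add_le_add hstep (ih (by omega))
      _ = b.choose (y + 1) + (a + 1 - b) * n ^ y := by
        rw [Nat.sub_add_comm hba, add_one_mul]; ring

theorem abs_choose_succ_sub_choose_succ_le {a b n y : ℕ} (ha : a ≤ n) (hb : b ≤ n) :
    |(a.choose (y + 1) : ℝ) - b.choose (y + 1)| ≤ |(a : ℝ) - b| * (n : ℝ) ^ y := by
  wlog hba : b ≤ a generalizing a b
  · rw [abs_sub_comm, abs_sub_comm (a : ℝ)]
    exact this hb ha (le_of_not_ge hba)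
  have hmono : (b.choose (y + 1) : ℝ) ≤ a.choose (y + 1) :=
    Nat.cast_le.mpr (Nat.choose_le_choose _ hba)
  have hlip : (a.choose (y + 1) : ℝ) ≤ b.choose (y + 1) + ((a : ℝ) - b) * (n : ℝ) ^ y := by
    have := (Nat.cast_le (α := ℝ)).mpr (Nat.choose_succ_le_choose_succ_add (y := y) hba ha)
    push_cast [Nat.cast_sub hba] at this
    exact this
  rw [abs_of_nonneg (sub_nonneg.mpr hmono),
    abs_of_nonneg (sub_nonneg.mpr (Nat.cast_le.mpr hba))]
  linarith

theorem choose_perturbation_bound_general (n x : ℕ)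
    (δ : ℝ) (hδ0 : 0 < δ)
    (a b : ℕ) (ha : a ≤ n) (hb : b ≤ n) (hab : |(a : ℝ) - (b : ℝ)| ≤ δ * n) :
    |(a.choose x : ℝ) - (b.choose x : ℝ)| ≤ 4 * δ * (n : ℝ) ^ x := by
  cases x with
  | zero => simp only [Nat.choose_zero_right, sub_self, abs_zero, pow_zero]; positivity
  | succ y =>
    have hpow : 0 ≤ δ * (n : ℝ) ^ (y + 1) := by positivity
    calc |(a.choose (y + 1) : ℝ) - b.choose (y + 1)| ≤ |(a : ℝ) - b| * (n : ℝ) ^ y :=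
          abs_choose_succ_sub_choose_succ_le ha hb
      _ ≤ δ * n * (n : ℝ) ^ y := by gcongr
      _ = δ * (n : ℝ) ^ (y + 1) := by ring
      _ ≤ 4 * δ * (n : ℝ) ^ (y + 1) := by linarith

/-- (Binomial coefficient perturbation bound.) Let `x ≤ k`,
`0 < δ ≤ 1/2`, `(1+δ)^k ≤ 2`, `k + 1 ≤ δ·n`, and let `a, b ≤ n` be natural numbers with
`|a − b| ≤ δ·n`. Then `|C(a,x) − C(b,x)| ≤ 4·δ·n^x`, where `C(L,M) = 0` for `L < M`. -/
theorem choose_perturbation_bound (n k x : ℕ) (hxk : x ≤ k)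
    (δ : ℝ) (hδ0 : 0 < δ) (hδ : δ ≤ 1 / 2) (hδk : (1 + δ) ^ k ≤ 2)
    (hkn : (k : ℝ) + 1 ≤ δ * n)
    (a b : ℕ) (ha : a ≤ n) (hb : b ≤ n) (hab : |(a : ℝ) - (b : ℝ)| ≤ δ * n) :
    |(a.choose x : ℝ) - (b.choose x : ℝ)| ≤ 4 * δ * (n : ℝ) ^ x :=
  choose_perturbation_bound_general n x δ hδ0 a b ha hb hab
end

section
/- Let k ≥ 1 and n ≥ 1 be natural numbers, I a nonempty finite set with |I| ≤ k, and x : I → ℕ with ∑_{i ∈ I} x_i = k. Let δ be a real number with 0 < 4δ ≤ 1, and let y : I → ℝ satisfy 0 ≤ y_i ≤ n^{x_i} for every i ∈ I. Then ∏_{i ∈ I}(y_i + 4δ·n^{x_i}) < ∏_{i ∈ I} y_i + 4δ·2^k·n^k, and ∏_{i ∈ I}(y_i − 4δ·n^{x_i}) > ∏_{i ∈ I} y_i − 4δ·2^k·n^k. -/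
/-!
Peeling off one factor, `(y + t) * P' - y * P = (y + t) * (P' - P) + t * P`, so when
`|y i| ≤ N i` and `|t i| ≤ ε * N i` the error of the product obeys `e ↦ (1 + ε) * e + ε`
(in units of `∏ N i`), which gives `(1 + ε) ^ m - 1`. For `ε ≤ 1` the geometric sum
`(1 + ε) ^ m - 1 = ε * ∑_{j < m} (1 + ε) ^ j` is at most `ε * (2 ^ m - 1) < ε * 2 ^ k`.
-/

open Finset

theorem abs_prod_add_sub_prod_le {ι : Type*} (s : Finset ι) {y t N : ι → ℝ} {ε : ℝ}
    (hy : ∀ i ∈ s, |y i| ≤ N i) (ht : ∀ i ∈ s, |t i| ≤ ε * N i) :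
    |∏ i ∈ s, (y i + t i) - ∏ i ∈ s, y i| ≤ ((1 + ε) ^ #s - 1) * ∏ i ∈ s, N i := by
  classical
  induction s using Finset.induction_on with
  | empty => simp
  | @insert a s ha ih =>
    simp only [forall_mem_insert] at hy ht
    obtain ⟨hya, hy⟩ := hy
    obtain ⟨hta, ht⟩ := ht
    have hya_ta : |y a + t a| ≤ (1 + ε) * N a := by
      linarith [abs_add_le (y a) (t a)]
    have hP : |∏ i ∈ s, y i| ≤ ∏ i ∈ s, N i := by
      rw [abs_prod]; exact prod_le_prod (fun _ _ ↦ abs_nonneg _) hy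
    rw [prod_insert ha, prod_insert ha, prod_insert ha, card_insert_of_notMem ha]
    calc |(y a + t a) * ∏ i ∈ s, (y i + t i) - y a * ∏ i ∈ s, y i|
        = |(y a + t a) * (∏ i ∈ s, (y i + t i) - ∏ i ∈ s, y i)
            + t a * ∏ i ∈ s, y i| := by
          congr 1; ring
      _ ≤ |y a + t a| * |∏ i ∈ s, (y i + t i) - ∏ i ∈ s, y i|
            + |t a| * |∏ i ∈ s, y i| := by
          rw [← abs_mul, ← abs_mul]; exact abs_add_le _ _
      _ ≤ (1 + ε) * N a * (((1 + ε) ^ #s - 1) * ∏ i ∈ s, N i)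
            + ε * N a * ∏ i ∈ s, N i :=
          add_le_add
            (mul_le_mul hya_ta (ih hy ht) (abs_nonneg _) ((abs_nonneg _).trans hya_ta))
            (mul_le_mul hta hP (abs_nonneg _) ((abs_nonneg _).trans hta))
      _ = ((1 + ε) ^ (#s + 1) - 1) * (N a * ∏ i ∈ s, N i) := by ring

theorem one_add_pow_sub_one_le {ε : ℝ} (hε0 : 0 ≤ ε) (hε1 : ε ≤ 1) (m : ℕ) :
    (1 + ε) ^ m - 1 ≤ ε * (2 ^ m - 1) := by
  calc (1 + ε) ^ m - 1 = ε * ∑ j ∈ range m, (1 + ε) ^ j := by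
        rw [← geom_sum_mul]; ring
    _ ≤ ε * ∑ j ∈ range m, (2 : ℝ) ^ j := by gcongr; linarith
    _ = ε * (2 ^ m - 1) := by rw [← geom_sum_mul]; ring

theorem product_perturbation_bound_general {ι : Type*} (I : Finset ι)
    (n k : ℕ) (hn : 1 ≤ n) (hIk : I.card ≤ k)
    (x : ι → ℕ) (hx : ∑ i ∈ I, x i = k)
    (δ : ℝ) (hδ0 : 0 < δ) (hδ : 4 * δ ≤ 1)
    (y : ι → ℝ) (hy0 : ∀ i ∈ I, 0 ≤ y i) (hyn : ∀ i ∈ I, y i ≤ (n : ℝ) ^ (x i)) :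
    (∏ i ∈ I, (y i + 4 * δ * (n : ℝ) ^ (x i))
        < (∏ i ∈ I, y i) + 4 * δ * 2 ^ k * (n : ℝ) ^ k) ∧
      (∏ i ∈ I, (y i - 4 * δ * (n : ℝ) ^ (x i))
        > (∏ i ∈ I, y i) - 4 * δ * 2 ^ k * (n : ℝ) ^ k) := by
  have hy : ∀ i ∈ I, |y i| ≤ (n : ℝ) ^ x i := fun i hi ↦
    (abs_of_nonneg (hy0 i hi)).trans_le (hyn i hi)
  have hprod : ∏ i ∈ I, (n : ℝ) ^ x i = (n : ℝ) ^ k := by rw [prod_pow_eq_pow_sum, hx]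
  have hfactor : (1 + 4 * δ) ^ #I - 1 < 4 * δ * 2 ^ k := by
    have : (2 : ℝ) ^ #I ≤ 2 ^ k := pow_le_pow_right₀ one_le_two hIk
    nlinarith [one_add_pow_sub_one_le (by linarith) hδ #I]
  have hbound :
      ((1 + 4 * δ) ^ #I - 1) * ∏ i ∈ I, (n : ℝ) ^ x i < 4 * δ * 2 ^ k * (n : ℝ) ^ k := by
    rw [hprod]; gcongr
  have hup := abs_prod_add_sub_prod_le I hy (t := fun i ↦ 4 * δ * (n : ℝ) ^ x i)
    fun i _ ↦ by rw [abs_of_nonneg (by positivity)]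
  have hdown := abs_prod_add_sub_prod_le I hy (t := fun i ↦ -(4 * δ * (n : ℝ) ^ x i))
    fun i _ ↦ by rw [abs_neg, abs_of_nonneg (by positivity)]
  simp only [← sub_eq_add_neg] at hdown
  constructor
  · linarith [(abs_lt.mp (hup.trans_lt hbound)).2]
  · linarith [(abs_lt.mp (hdown.trans_lt hbound)).1]

/-- (Product perturbation bound.) Let `k, n ≥ 1`, `I` a nonempty finite
set with `|I| ≤ k`, `x : I → ℕ` with `∑_{i ∈ I} x i = k`, `0 < 4δ ≤ 1`, and
`0 ≤ y i ≤ n^(x i)` for every `i ∈ I`. Then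
`∏_{i∈I} (y i + 4δ·n^(x i)) < ∏_{i∈I} y i + 4δ·2^k·n^k` and
`∏_{i∈I} (y i − 4δ·n^(x i)) > ∏_{i∈I} y i − 4δ·2^k·n^k`. -/
theorem product_perturbation_bound {ι : Type*} (I : Finset ι) (hI : I.Nonempty)
    (n k : ℕ) (hn : 1 ≤ n) (hk : 1 ≤ k) (hIk : I.card ≤ k)
    (x : ι → ℕ) (hx : ∑ i ∈ I, x i = k)
    (δ : ℝ) (hδ0 : 0 < δ) (hδ : 4 * δ ≤ 1)
    (y : ι → ℝ) (hy0 : ∀ i ∈ I, 0 ≤ y i) (hyn : ∀ i ∈ I, y i ≤ (n : ℝ) ^ (x i)) :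
    (∏ i ∈ I, (y i + 4 * δ * (n : ℝ) ^ (x i))
        < (∏ i ∈ I, y i) + 4 * δ * 2 ^ k * (n : ℝ) ^ k) ∧
      (∏ i ∈ I, (y i - 4 * δ * (n : ℝ) ^ (x i))
        > (∏ i ∈ I, y i) - 4 * δ * 2 ^ k * (n : ℝ) ^ k) :=
  product_perturbation_bound_general I n k hn hIk x hx δ hδ0 hδ y hy0 hyn
end

section
/- Let n, k be natural numbers with 1 ≤ k ≤ n, I a nonempty finite set with |I| ≤ k, and x : I → ℕ with x_i ≥ 1 for all i and ∑_{i ∈ I} x_i = k. Let δ be a real number satisfying 0 < δ ≤ 1/4, (1+δ)^k ≤ 2, and k + 1 ≤ δ·n. Let a_i, b_i be natural numbers with a_i ≤ n, b_i ≤ n, and |a_i − b_i| ≤ δ·n for every i ∈ I. Then |∏_{i ∈ I} C(a_i, x_i)/C(n, k) − ∏_{i ∈ I} C(b_i, x_i)/C(n, k)| ≤ 4·δ·(2k)^k, where C(·,·) denotes the binomial coefficient with the convention C(L, M) = 0 whenever L < M. -/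
/-!
On `[0, n]` the map `L ↦ C(L, x + 1)` is Lipschitz with constant `n ^ x` (its increments are
`C(L, x) ≤ n ^ x`), so each factor changes by at most `δ n ^ (x i)`. Telescoping the product, whose
factors are bounded by `n ^ (x i)`, the numerators differ by at most `|I| δ n ^ k ≤ k δ n ^ k`,
and `n ^ k ≤ k ^ k C(n, k)` turns this into `k ^ (k + 1) δ ≤ 4 δ (2k) ^ k`.
-/

open Finset

theorem Nat.choose_succ_le_choose_add_sub_mul_pow {a b : ℕ} (x : ℕ) (hba : b ≤ a) :
    a.choose (x + 1) ≤ b.choose (x + 1) + (a - b) * a ^ x := by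
  induction a, hba using Nat.le_induction with
  | base => simp
  | succ a hba ih =>
    have hpow : a ^ x ≤ (a + 1) ^ x := Nat.pow_le_pow_left a.le_succ x
    have hchoose : a.choose x ≤ a ^ x := Nat.choose_le_pow a x
    rw [Nat.choose_succ_succ, Nat.sub_add_comm hba, add_one_mul]
    nlinarith [Nat.mul_le_mul_left (a - b) hpow]

theorem abs_choose_sub_choose_le {a b n : ℕ} (x : ℕ) (ha : a ≤ n) (hb : b ≤ n) :
    |(a.choose (x + 1) : ℝ) - b.choose (x + 1)| ≤ |(a : ℝ) - b| * n ^ x := by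
  wlog hba : b ≤ a generalizing a b
  · rw [abs_sub_comm, abs_sub_comm (a : ℝ)]
    exact this hb ha (le_of_not_ge hba)
  have hmono : (b.choose (x + 1) : ℝ) ≤ a.choose (x + 1) := mod_cast Nat.choose_le_choose _ hba
  have hlip : (a.choose (x + 1) : ℝ) ≤ b.choose (x + 1) + ((a : ℝ) - b) * a ^ x := by
    exact_mod_cast Nat.choose_succ_le_choose_add_sub_mul_pow x hba
  have hpow : (a : ℝ) ^ x ≤ n ^ x := by gcongr
  have hab : (0 : ℝ) ≤ a - b := sub_nonneg.mpr (mod_cast hba)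
  rw [abs_of_nonneg (sub_nonneg.mpr hmono), abs_of_nonneg hab]
  nlinarith [mul_le_mul_of_nonneg_left hpow hab]

theorem Nat.pow_le_pow_mul_choose {n k : ℕ} (hkn : k ≤ n) : n ^ k ≤ k ^ k * n.choose k := by
  have key : k.descFactorial k * n ^ k ≤ k ^ k * n.descFactorial k := by
    rw [Nat.descFactorial_eq_prod_range, Nat.descFactorial_eq_prod_range, ← card_range k,
      ← prod_const, ← prod_const, card_range, ← prod_mul_distrib, ← prod_mul_distrib]
    refine prod_le_prod' fun i hi => ?_
    rw [Nat.sub_mul, Nat.mul_sub]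
    have : k * i ≤ i * n := by rw [Nat.mul_comm]; exact Nat.mul_le_mul_left i hkn
    omega
  rw [Nat.descFactorial_self, Nat.descFactorial_eq_factorial_mul_choose, Nat.mul_left_comm] at key
  exact Nat.le_of_mul_le_mul_left key k.factorial_pos

theorem abs_prod_sub_prod_le {ι R : Type*} [CommRing R] [LinearOrder R] [IsStrictOrderedRing R]
    (s : Finset ι) {f g C : ι → R} {ε : R}
    (hf : ∀ i ∈ s, 0 ≤ f i ∧ f i ≤ C i) (hg : ∀ i ∈ s, 0 ≤ g i ∧ g i ≤ C i)
    (hfg : ∀ i ∈ s, |f i - g i| ≤ ε * C i) :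
    |∏ i ∈ s, f i - ∏ i ∈ s, g i| ≤ #s * ε * ∏ i ∈ s, C i := by
  classical
  induction s using Finset.induction_on with
  | empty => simp
  | insert a t ha ih =>
    simp only [forall_mem_insert] at hf hg hfg
    obtain ⟨-, hf⟩ := hf
    obtain ⟨⟨hga, hgC⟩, hg⟩ := hg
    have hft : 0 ≤ ∏ i ∈ t, f i := prod_nonneg fun i hi => (hf i hi).1
    have hfC : ∏ i ∈ t, f i ≤ ∏ i ∈ t, C i :=
      prod_le_prod (fun i hi => (hf i hi).1) fun i hi => (hf i hi).2
    have ih := ih hf hg hfg.2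
    rw [prod_insert ha, prod_insert ha, prod_insert ha, card_insert_of_notMem ha]
    calc |f a * ∏ i ∈ t, f i - g a * ∏ i ∈ t, g i|
        = |(f a - g a) * ∏ i ∈ t, f i + g a * (∏ i ∈ t, f i - ∏ i ∈ t, g i)| := by ring_nf
      _ ≤ |f a - g a| * ∏ i ∈ t, f i + g a * |∏ i ∈ t, f i - ∏ i ∈ t, g i| := by
        refine (abs_add_le _ _).trans_eq ?_
        rw [abs_mul, abs_mul, abs_of_nonneg hft, abs_of_nonneg hga]
      _ ≤ ε * C a * ∏ i ∈ t, C i + C a * (#t * ε * ∏ i ∈ t, C i) :=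
        add_le_add (mul_le_mul hfg.1 hfC hft ((abs_nonneg _).trans hfg.1))
          (mul_le_mul hgC ih (abs_nonneg _) (hga.trans hgC))
      _ = ↑(#t + 1) * ε * (C a * ∏ i ∈ t, C i) := by push_cast; ring

theorem empirical_frequency_approx_bound_general {ι : Type*} (I : Finset ι)
    (n k : ℕ) (hkn : k ≤ n)
    (x : ι → ℕ) (hx1 : ∀ i ∈ I, 1 ≤ x i) (hxsum : ∑ i ∈ I, x i = k)
    (δ : ℝ) (hδ0 : 0 < δ)
    (a b : ι → ℕ) (ha : ∀ i ∈ I, a i ≤ n) (hb : ∀ i ∈ I, b i ≤ n)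
    (hab : ∀ i ∈ I, |(a i : ℝ) - (b i : ℝ)| ≤ δ * n) :
    |(∏ i ∈ I, ((a i).choose (x i) : ℝ)) / (n.choose k : ℝ)
        - (∏ i ∈ I, ((b i).choose (x i) : ℝ)) / (n.choose k : ℝ)|
      ≤ 4 * δ * (2 * k : ℝ) ^ k := by
  have hchoose : ∀ c m : ℕ, c ≤ n → 0 ≤ (c.choose m : ℝ) ∧ (c.choose m : ℝ) ≤ (n : ℝ) ^ m :=
    fun c m hc => ⟨by positivity, mod_cast (Nat.choose_le_choose m hc).trans (Nat.choose_le_pow n m)⟩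
  have hlip : ∀ i ∈ I, |((a i).choose (x i) : ℝ) - (b i).choose (x i)| ≤ δ * (n : ℝ) ^ x i := by
    intro i hi
    obtain ⟨y, hy⟩ := Nat.exists_eq_add_of_le' (hx1 i hi)
    rw [hy, pow_succ', ← mul_assoc]
    exact (abs_choose_sub_choose_le y (ha i hi) (hb i hi)).trans (by gcongr; exact hab i hi)
  have hprod := abs_prod_sub_prod_le I (fun i hi => hchoose _ _ (ha i hi))
    (fun i hi => hchoose _ _ (hb i hi)) hlip
  rw [prod_pow_eq_pow_sum, hxsum] at hprod
  have hcard : #I ≤ k := by simpa [hxsum] using card_nsmul_le_sum I x 1 hx1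
  have hpow : (n : ℝ) ^ k ≤ k ^ k * n.choose k := mod_cast Nat.pow_le_pow_mul_choose hkn
  have hk : (k : ℝ) ≤ 4 * 2 ^ k := by
    have : (k : ℝ) ≤ 2 ^ k := mod_cast Nat.lt_two_pow_self.le
    linarith [pow_pos (two_pos : (0 : ℝ) < 2) k]
  have hpos : (0 : ℝ) < n.choose k := mod_cast Nat.choose_pos hkn
  rw [div_sub_div_same, abs_div, abs_of_pos hpos, div_le_iff₀ hpos]
  calc _ ≤ #I * δ * (n : ℝ) ^ k := hprod
    _ ≤ k * δ * (k ^ k * n.choose k) := by gcongr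
    _ ≤ 4 * 2 ^ k * δ * (k ^ k * n.choose k) := by gcongr
    _ = 4 * δ * (2 * k : ℝ) ^ k * n.choose k := by ring

/-- (Approximation bound for empirical frequencies.) Let `1 ≤ k ≤ n`,
`I` a nonempty finite set with `|I| ≤ k`, `x : I → ℕ` with `x i ≥ 1` and `∑_{i∈I} x i = k`,
and let `δ` satisfy `0 < δ ≤ 1/4`, `(1+δ)^k ≤ 2`, `k + 1 ≤ δ·n`. If `a i, b i ≤ n` are
natural numbers with `|a i − b i| ≤ δ·n` for every `i ∈ I`, then
`|∏_{i∈I} C(a i, x i)/C(n,k) − ∏_{i∈I} C(b i, x i)/C(n,k)| ≤ 4·δ·(2k)^k`,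
where `C(L,M) = 0` for `L < M`. -/
theorem empirical_frequency_approx_bound {ι : Type*} (I : Finset ι) (hI : I.Nonempty)
    (n k : ℕ) (hk1 : 1 ≤ k) (hkn : k ≤ n) (hIk : I.card ≤ k)
    (x : ι → ℕ) (hx1 : ∀ i ∈ I, 1 ≤ x i) (hxsum : ∑ i ∈ I, x i = k)
    (δ : ℝ) (hδ0 : 0 < δ) (hδ4 : δ ≤ 1 / 4) (hδk : (1 + δ) ^ k ≤ 2)
    (hδn : (k : ℝ) + 1 ≤ δ * n)
    (a b : ι → ℕ) (ha : ∀ i ∈ I, a i ≤ n) (hb : ∀ i ∈ I, b i ≤ n)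
    (hab : ∀ i ∈ I, |(a i : ℝ) - (b i : ℝ)| ≤ δ * n) :
    |(∏ i ∈ I, ((a i).choose (x i) : ℝ)) / (n.choose k : ℝ)
        - (∏ i ∈ I, ((b i).choose (x i) : ℝ)) / (n.choose k : ℝ)|
      ≤ 4 * δ * (2 * k : ℝ) ^ k :=
  empirical_frequency_approx_bound_general I n k hkn x hx1 hxsum δ hδ0 a b ha hb hab
end
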